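/- arXiv:2102.05003 — 7 statements merged into one kernel-verified Lean document; each statement's English description precedes it below -/
import Mathlib

section
/- Let S be a positive random variable on a probability space (Ω, 𝔉, ℙ), let q ∈ [0,1), set s_q := VaR_q(S) := inf{s ∈ [0,∞) : ℙ(S ≤ s) ≥ q}, and assume ℙ(S > s_q) > 0 and that S·1{S > s_q} and (log S)·1{S > s_q} are integrable. Then s_q ≤ exp( 𝔼[(log S)·1{S > s_q}] / ℙ(S > s_q) ) ≤ 𝔼[S·1{S > s_q}] / ℙ(S > s_q); that is, VaR_q(S) ≤ GTE_q(S) ≤ CTE_q(S). -/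
open MeasureTheory Set

/-- Value-at-Risk at level `q`: `inf {s ∈ [0,∞) : ℙ(S ≤ s) ≥ q}`. -/
noncomputable def VaR {Ω : Type*} [MeasurableSpace Ω] (μ : Measure Ω) (S : Ω → ℝ) (q : ℝ) : ℝ :=
  sInf {s : ℝ | 0 ≤ s ∧ ENNReal.ofReal q ≤ μ {ω | S ω ≤ s}}

/-- VaR_q(S) ≤ GTE_q(S) ≤ CTE_q(S). -/
theorem gte_between_var_and_cte
    {Ω : Type*} [MeasurableSpace Ω] (μ : Measure Ω) [IsProbabilityMeasure μ]
    (S : Ω → ℝ) (hSmeas : Measurable S) (hSpos : ∀ ω, 0 < S ω)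
    (q : ℝ) (hq : q ∈ Set.Ico (0 : ℝ) 1)
    (sq : ℝ) (hsq : sq = VaR μ S q)
    (hP : 0 < μ {ω | sq < S ω})
    (hint₁ : IntegrableOn S {ω | sq < S ω} μ)
    (hint₂ : IntegrableOn (fun ω => Real.log (S ω)) {ω | sq < S ω} μ) :
    sq ≤ Real.exp ((∫ ω in {ω | sq < S ω}, Real.log (S ω) ∂μ) / (μ {ω | sq < S ω}).toReal) ∧
      Real.exp ((∫ ω in {ω | sq < S ω}, Real.log (S ω) ∂μ) / (μ {ω | sq < S ω}).toReal) ≤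
        (∫ ω in {ω | sq < S ω}, S ω ∂μ) / (μ {ω | sq < S ω}).toReal := by
  set A : Set Ω := {ω | sq < S ω} with hA
  have hAmeas : MeasurableSet A := measurableSet_lt measurable_const hSmeas
  have hμA_ne : μ A ≠ 0 := hP.ne'
  have hμA_top : μ A ≠ ⊤ := measure_ne_top μ A
  have hc : 0 < (μ A).toReal := ENNReal.toReal_pos hμA_ne hμA_top
  -- the conditional measure
  set ν : Measure Ω := (μ A)⁻¹ • μ.restrict A with hν
  have hνprob : IsProbabilityMeasure ν := by
    constructor
    rw [hν, Measure.smul_apply, Measure.restrict_apply_univ, smul_eq_mul,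
      ENNReal.inv_mul_cancel hμA_ne hμA_top]
  have hinv : ((μ A)⁻¹).toReal = ((μ A).toReal)⁻¹ := ENNReal.toReal_inv _
  have hint_eq : ∀ f : Ω → ℝ, (∫ ω, f ω ∂ν) = (∫ ω in A, f ω ∂μ) / (μ A).toReal := by
    intro f
    rw [hν, integral_smul_measure, hinv, smul_eq_mul, div_eq_inv_mul]
  -- integrability under ν
  have hiν₁ : Integrable S ν := by
    rw [hν]; exact hint₁.smul_measure (by simp [hμA_ne])
  have hiν₂ : Integrable (fun ω => Real.log (S ω)) ν := by
    rw [hν]; exact hint₂.smul_measure (by simp [hμA_ne])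
  -- second inequality via Jensen
  have hjensen : Real.exp (∫ ω, Real.log (S ω) ∂ν) ≤ ∫ ω, S ω ∂ν := by
    have h := convexOn_exp.map_integral_le (μ := ν) Real.continuous_exp.continuousOn
      isClosed_univ (Filter.Eventually.of_forall fun x => mem_univ _) hiν₂ ?_
    · refine h.trans_eq ?_
      refine integral_congr_ae (Filter.Eventually.of_forall fun ω => ?_)
      simp [Real.exp_log (hSpos ω)]
    · refine hiν₁.congr (Filter.Eventually.of_forall fun ω => ?_)
      simp [Function.comp, Real.exp_log (hSpos ω)]
  have hsq0 : 0 ≤ sq := by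
    rw [hsq]; exact Real.sInf_nonneg fun x hx => hx.1
  constructor
  · -- first inequality
    rcases eq_or_lt_of_le hsq0 with h0 | h0
    · rw [← h0]; exact (Real.exp_pos _).le
    · have hlog : Real.log sq ≤ ∫ ω, Real.log (S ω) ∂ν := by
        have : (∫ ω, (Real.log sq : ℝ) ∂ν) ≤ ∫ ω, Real.log (S ω) ∂ν := by
          refine integral_mono_ae (integrable_const _) hiν₂ ?_
          have hmem : ∀ᵐ ω ∂ν, ω ∈ A := by
            rw [hν]; exact Measure.ae_smul_measure (ae_restrict_mem hAmeas) _
          filter_upwards [hmem] with ω hω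
          exact Real.log_le_log h0 (le_of_lt hω)
        simpa using this
      calc sq = Real.exp (Real.log sq) := (Real.exp_log h0).symm
        _ ≤ Real.exp (∫ ω, Real.log (S ω) ∂ν) := Real.exp_le_exp.mpr hlog
        _ = _ := by rw [hint_eq]
  · rw [← hint_eq, ← hint_eq]; exact hjensen
end

section
/- Let X_1, …, X_n be positive integrable random variables with sum S := X_1 + ⋯ + X_n and ratios R_i := X_i/S. Fix q ∈ [0,1), set s_q := VaR_q(S), and assume ℙ(S > s_q) > 0. Then for each i, r_{q,i} = r̃_{q,i} + Cov(R_i, S | S > s_q) / CTE_q(S), where Cov(R_i, S | S > s_q) := 𝔼[R_i·S·1{S > s_q}]/ℙ(S > s_q) − (𝔼[R_i·1{S > s_q}]/ℙ(S > s_q))·(𝔼[S·1{S > s_q}]/ℙ(S > s_q)). -/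
open MeasureTheory Set

/-- The tail event `{S > VaR_q(S)}`. -/
def tailSet {Ω : Type*} [MeasurableSpace Ω] (μ : Measure Ω) (S : Ω → ℝ) (q : ℝ) : Set Ω :=
  {ω | VaR μ S q < S ω}

/-- CTE-based proportional allocation `r_{q,i} = 𝔼[X·1{S>s_q}]/𝔼[S·1{S>s_q}]`. -/
noncomputable def cteAlloc {Ω : Type*} [MeasurableSpace Ω] (μ : Measure Ω)
    (X S : Ω → ℝ) (q : ℝ) : ℝ :=
  (∫ ω in tailSet μ S q, X ω ∂μ) / (∫ ω in tailSet μ S q, S ω ∂μ)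

/-- GTE-based proportional allocation `r̃_{q,i} = 𝔼[(X/S)·1{S>s_q}]/ℙ(S>s_q)`. -/
noncomputable def gteAlloc {Ω : Type*} [MeasurableSpace Ω] (μ : Measure Ω)
    (X S : Ω → ℝ) (q : ℝ) : ℝ :=
  (∫ ω in tailSet μ S q, X ω / S ω ∂μ) / (μ (tailSet μ S q)).toReal

/-- `r_{q,i} = r̃_{q,i} + Cov(R_i, S | S > s_q)/CTE_q(S)`. -/
theorem cteAlloc_eq_gteAlloc_add_cov
    {Ω : Type*} [MeasurableSpace Ω] (μ : Measure Ω) [IsProbabilityMeasure μ]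
    (n : ℕ) (X : Fin n → Ω → ℝ)
    (hmeas : ∀ i, Measurable (X i)) (hpos : ∀ i ω, 0 < X i ω)
    (hint : ∀ i, Integrable (X i) μ)
    (S : Ω → ℝ) (hS : S = fun ω => ∑ i, X i ω)
    (q : ℝ) (hq : q ∈ Set.Ico (0 : ℝ) 1)
    (hP : 0 < μ (tailSet μ S q)) (i : Fin n) :
    cteAlloc μ (X i) S q =
      gteAlloc μ (X i) S q +
        ((∫ ω in tailSet μ S q, (X i ω / S ω) * S ω ∂μ) / (μ (tailSet μ S q)).toReal -
            ((∫ ω in tailSet μ S q, X i ω / S ω ∂μ) / (μ (tailSet μ S q)).toReal) *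
              ((∫ ω in tailSet μ S q, S ω ∂μ) / (μ (tailSet μ S q)).toReal)) /
          ((∫ ω in tailSet μ S q, S ω ∂μ) / (μ (tailSet μ S q)).toReal) := by

  have hSpos : ∀ ω, 0 < S ω := by
    intro ω
    rw [hS]
    exact Finset.sum_pos (fun j _ => hpos j ω) ⟨i, Finset.mem_univ i⟩
  have hSm : Measurable S := by
    rw [hS]; exact Finset.measurable_sum _ fun j _ => hmeas j
  have hSint : Integrable S μ := by
    rw [hS]; exact integrable_finset_sum _ fun j _ => hint j
  set T := tailSet μ S q with hT
  have hTmeas : MeasurableSet T := measurableSet_lt measurable_const hSm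
  have hp : 0 < (μ T).toReal :=
    ENNReal.toReal_pos hP.ne' (measure_ne_top μ T)
  have hXS : (∫ ω in T, (X i ω / S ω) * S ω ∂μ) = ∫ ω in T, X i ω ∂μ := by
    refine integral_congr_ae (Filter.Eventually.of_forall fun ω => ?_)
    exact div_mul_cancel₀ _ (hSpos ω).ne'
  have hB : 0 < ∫ ω in T, S ω ∂μ := by
    rw [setIntegral_pos_iff_support_of_nonneg_ae
      (Filter.Eventually.of_forall fun ω => (hSpos ω).le) (hSint.integrableOn)]
    have : Function.support S ∩ T = T := by
      ext ω; simp [Function.support, (hSpos ω).ne']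
    rw [this]; exact hP
  rw [cteAlloc, gteAlloc, hXS]
  rw [← hT]
  field_simp
  ring
end

section
/- Let S be a positive integrable random variable with ℙ(S > u) > 0 for every u ≥ 0, and let R be a bounded random variable (e.g., R = X/S with 0 ≤ X ≤ S). Suppose that for every u ≥ 0 the conditional covariance vanishes: 𝔼[R·S·1{S > u}]·ℙ(S > u) = 𝔼[R·1{S > u}]·𝔼[S·1{S > u}]. Then the conditional expectation of R given σ(S) is almost surely constant and equals 𝔼[R]; in particular, if R = X/S, then 𝔼[X/S | σ(S)] = 𝔼[X]/𝔼[S] almost surely (using that r_{0,i} = r̃_{0,i}). -/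
/-!
Write `f t = 𝔼[R; S > t]`, `p t = ℙ(S > t)`, and `F`, `P` for their tail integrals over `(t, ∞)`.
By Fubini, `𝔼[R S; S > u] = u f u + F u` and `𝔼[S; S > u] = u p u + P u`, so the vanishing
covariance reads `F p = f P` on `[0, ∞)`. As `f` and `p` are right-continuous, `F` and `P` have
right derivatives `-f` and `-p`; hence `F / P` has right derivative zero and is constant, which
forces `f = k p`, with `k = 𝔼[R]` read off at `t = 0`. So `𝔼[R; S > t] = 𝔼[R] ℙ(S > t)` for every
`t`, and since the rays `(t, ∞)` form a π-system generating the Borel sets, this extends to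
`𝔼[R; S ∈ B] = 𝔼[R] ℙ(S ∈ B)` for every Borel `B`.
-/

open MeasureTheory Set Filter Topology

section TailIntegralIoi

variable {f p : ℝ → ℝ} {a : ℝ}

theorem hasDerivWithinAt_integral_Ioi {x : ℝ} (hf : IntegrableOn f (Ioi a)) (hax : a ≤ x)
    (hfx : ContinuousWithinAt f (Ioi x) x) :
    HasDerivWithinAt (fun t => ∫ s in Ioi t, f s) (-f x) (Ici x) x := by
  have hmeas : StronglyMeasurableAtFilter f (𝓝[Ioi x] x) :=
    AEStronglyMeasurable.stronglyMeasurableAtFilter_of_mem hf.aestronglyMeasurable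
      (mem_of_superset self_mem_nhdsWithin (Ioi_subset_Ioi hax))
  have hprim := intervalIntegral.integral_hasDerivWithinAt_right (s := Ici x)
    ((intervalIntegrable_iff_integrableOn_Ioc_of_le hax).2 (hf.mono_set Ioc_subset_Ioi_self))
    hmeas hfx
  refine (hprim.const_sub (∫ s in Ioi a, f s)).congr_of_mem (fun t ht => ?_) self_mem_Ici
  rw [← intervalIntegral.integral_Ioi_sub_Ioi hf (hax.trans ht), sub_sub_cancel]

theorem continuousOn_integral_Ioi (hf : IntegrableOn f (Ioi a)) (b : ℝ) :
    ContinuousOn (fun t => ∫ s in Ioi t, f s) (Icc a b) := by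
  rcases lt_or_ge b a with hba | hab
  · simp [Icc_eq_empty_of_lt hba]
  have hprim : ContinuousOn (fun t => ∫ s in a..t, f s) (Icc a b) := by
    rw [← uIcc_of_le hab]
    exact intervalIntegral.continuousOn_primitive_interval'
      ((intervalIntegrable_iff_integrableOn_Ioc_of_le hab).2 (hf.mono_set Ioc_subset_Ioi_self))
      left_mem_uIcc
  refine ((continuousOn_const (c := ∫ s in Ioi a, f s)).sub hprim).congr fun t ht => ?_
  rw [Pi.sub_apply, ← intervalIntegral.integral_Ioi_sub_Ioi hf ht.1, sub_sub_cancel]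

theorem exists_eq_const_mul_of_integral_Ioi_mul_eq (hf : IntegrableOn f (Ioi a))
    (hp : IntegrableOn p (Ioi a)) (hfc : ∀ x, a ≤ x → ContinuousWithinAt f (Ioi x) x)
    (hpc : ∀ x, a ≤ x → ContinuousWithinAt p (Ioi x) x)
    (hP : ∀ t, a ≤ t → 0 < ∫ s in Ioi t, p s)
    (h : ∀ t, a ≤ t → (∫ s in Ioi t, f s) * p t = f t * ∫ s in Ioi t, p s) :
    ∃ k, ∀ t, a ≤ t → f t = k * p t := by
  set F := fun t => ∫ s in Ioi t, f s
  set P := fun t => ∫ s in Ioi t, p s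
  have hratio : ∀ t, a ≤ t → F t / P t = F a / P a := fun t ht => by
    refine constant_of_has_deriv_right_zero
      ((continuousOn_integral_Ioi hf t).div (continuousOn_integral_Ioi hp t)
        fun x hx => (hP x hx.1).ne') (fun x hx => ?_) t ⟨ht, le_rfl⟩
    refine ((hasDerivWithinAt_integral_Ioi hf hx.1 (hfc x hx.1)).div
      (hasDerivWithinAt_integral_Ioi hp hx.1 (hpc x hx.1)) (hP x hx.1).ne').congr_deriv ?_
    rw [div_eq_zero_iff]
    left
    linear_combination h x hx.1
  refine ⟨F a / P a, fun t ht => ?_⟩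
  have hPt := (hP t ht).ne'
  have hFt : F t = F a / P a * P t := by rw [← hratio t ht, div_mul_cancel₀ _ hPt]
  refine mul_right_cancel₀ hPt ?_
  linear_combination -(h t ht) + p t * hFt

end TailIntegralIoi

theorem integral_Ioi_pos_of_pos {p : ℝ → ℝ} {a : ℝ} (hp : IntegrableOn p (Ioi a))
    (hpos : ∀ s, a < s → 0 < p s) : 0 < ∫ s in Ioi a, p s := by
  rw [setIntegral_pos_iff_support_of_nonneg_ae
    ((ae_restrict_iff' measurableSet_Ioi).2 (Eventually.of_forall fun s hs => (hpos s hs).le)) hp]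
  calc (0 : ENNReal) < volume (Ioi a) := by simp
    _ ≤ _ := measure_mono (subset_inter (fun s hs => (hpos s hs).ne') subset_rfl)

theorem integral_Ioi_indicator_Iio_const (u s r : ℝ) :
    ∫ t in Ioi u, (Iio s).indicator (fun _ => r) t = r * max (s - u) 0 := by
  rw [integral_indicator_const _ measurableSet_Iio, measureReal_def,
    Measure.restrict_apply measurableSet_Iio, Iio_inter_Ioi, Real.volume_Ioo,
    ENNReal.toReal_ofReal', smul_eq_mul, mul_comm]

theorem indicator_setOf_lt_eq_indicator_Iio {Ω : Type*} {R S : Ω → ℝ} (t : ℝ) (ω : Ω) :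
    {ω | t < S ω}.indicator R ω = (Iio (S ω)).indicator (fun _ => R ω) t := by
  simp [indicator_apply]

section TailExpectation

variable {Ω : Type*} [MeasurableSpace Ω] {μ : Measure Ω} {R S : Ω → ℝ}

theorem continuousWithinAt_setIntegral_lt (hR : Integrable R μ) (hS : Measurable S) (x : ℝ) :
    ContinuousWithinAt (fun t => ∫ ω in {ω | t < S ω}, R ω ∂μ) (Ici x) x := by
  have hmeas : ∀ t : ℝ, MeasurableSet {ω | t < S ω} := fun _ =>
    measurableSet_lt measurable_const hS
  simp_rw [← integral_indicator (hmeas _)]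
  refine continuousWithinAt_of_dominated (bound := fun ω => ‖R ω‖)
    (Eventually.of_forall fun t => (hR.indicator (hmeas t)).aestronglyMeasurable)
    (Eventually.of_forall fun t => Eventually.of_forall fun ω => norm_indicator_le_norm_self _ _)
    hR.norm (Eventually.of_forall fun ω => ?_)
  rcases lt_or_ge x (S ω) with hx | hx
  · refine (continuousWithinAt_const (b := R ω)).congr_of_eventuallyEq ?_
      (indicator_of_mem (s := {ω | x < S ω}) hx R)
    filter_upwards [nhdsWithin_le_nhds (Iio_mem_nhds hx)] with t ht
    exact indicator_of_mem (s := {ω | t < S ω}) ht R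
  · exact (continuousWithinAt_const (b := 0)).congr
      (fun t ht => indicator_of_notMem (s := {ω | t < S ω}) (not_lt.2 (hx.trans ht)) R)
      (indicator_of_notMem (s := {ω | x < S ω}) (not_lt.2 hx) R)

variable [IsFiniteMeasure μ] {C : ℝ}

theorem integrable_uncurry_indicator_setOf_lt (hSi : Integrable S μ) (hS : Measurable S)
    (hR : Measurable R) (hRC : ∀ ω, |R ω| ≤ C) (u : ℝ) :
    Integrable (Function.uncurry fun t ω => {ω | t < S ω}.indicator R ω)
      ((volume.restrict (Ioi u)).prod μ) := by
  refine (integrable_prod_iff' ?_).2 ⟨Eventually.of_forall fun ω => ?_, ?_⟩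
  · exact (hR.comp measurable_snd).indicator
      (measurableSet_lt measurable_fst (hS.comp measurable_snd)) |>.aestronglyMeasurable
  · simp only [Function.uncurry_apply_pair, indicator_setOf_lt_eq_indicator_Iio]
    exact (integrable_indicator_iff measurableSet_Iio).2 (integrableOn_const (by
      rw [Measure.restrict_apply measurableSet_Iio, Iio_inter_Ioi, Real.volume_Ioo]
      exact ENNReal.ofReal_ne_top))
  · simp only [Function.uncurry_apply_pair, indicator_setOf_lt_eq_indicator_Iio,
      norm_indicator_eq_indicator_norm, integral_Ioi_indicator_Iio_const]
    exact (hSi.sub (integrable_const u)).pos_part.bdd_mul hR.norm.aestronglyMeasurable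
      (Eventually.of_forall fun ω => by simpa using hRC ω)

theorem integral_mul_max_sub_eq_integral_Ioi (hSi : Integrable S μ) (hS : Measurable S)
    (hR : Measurable R) (hRC : ∀ ω, |R ω| ≤ C) (u : ℝ) :
    ∫ ω, R ω * max (S ω - u) 0 ∂μ = ∫ t in Ioi u, ∫ ω in {ω | t < S ω}, R ω ∂μ := calc
  _ = ∫ ω, (∫ t in Ioi u, {ω | t < S ω}.indicator R ω) ∂μ := by
    simp only [indicator_setOf_lt_eq_indicator_Iio, integral_Ioi_indicator_Iio_const]
  _ = ∫ t in Ioi u, ∫ ω, {ω | t < S ω}.indicator R ω ∂μ :=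
    (integral_integral_swap (integrable_uncurry_indicator_setOf_lt hSi hS hR hRC u)).symm
  _ = _ := by simp only [integral_indicator (measurableSet_lt measurable_const hS)]

theorem integrableOn_setIntegral_lt (hSi : Integrable S μ) (hS : Measurable S)
    (hR : Measurable R) (hRC : ∀ ω, |R ω| ≤ C) (u : ℝ) :
    IntegrableOn (fun t => ∫ ω in {ω | t < S ω}, R ω ∂μ) (Ioi u) := by
  simpa only [IntegrableOn, Function.uncurry_apply_pair,
    integral_indicator (measurableSet_lt measurable_const hS)] using
    (integrable_uncurry_indicator_setOf_lt hSi hS hR hRC u).integral_prod_left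

theorem setIntegral_mul_eq_add_integral_Ioi (hSi : Integrable S μ) (hS : Measurable S)
    (hR : Measurable R) (hRC : ∀ ω, |R ω| ≤ C) (u : ℝ) :
    ∫ ω in {ω | u < S ω}, R ω * S ω ∂μ =
      u * ∫ ω in {ω | u < S ω}, R ω ∂μ + ∫ t in Ioi u, ∫ ω in {ω | t < S ω}, R ω ∂μ := by
  have hmeas : MeasurableSet {ω | u < S ω} := measurableSet_lt measurable_const hS
  have hRi : Integrable R μ :=
    .of_bound hR.aestronglyMeasurable C (Eventually.of_forall hRC)
  have hRSu : Integrable (fun ω => R ω * (S ω - u)) μ :=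
    (hSi.sub (integrable_const u)).bdd_mul hR.aestronglyMeasurable
      (Eventually.of_forall hRC)
  have hposPart : ∫ ω in {ω | u < S ω}, R ω * (S ω - u) ∂μ = ∫ ω, R ω * max (S ω - u) 0 ∂μ := by
    rw [← setIntegral_eq_integral_of_forall_compl_eq_zero (s := {ω | u < S ω})
      (f := fun ω => R ω * max (S ω - u) 0) fun ω hω => by
      rw [max_eq_right (sub_nonpos.2 (not_lt.1 hω)), mul_zero]]
    exact setIntegral_congr_fun hmeas fun ω hω => by rw [max_eq_left (sub_nonneg.2 hω.le)]
  rw [← integral_mul_max_sub_eq_integral_Ioi hSi hS hR hRC u, ← hposPart,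
    ← integral_const_mul, ← integral_add (hRi.const_mul u).restrict hRSu.restrict]
  congr with ω
  ring

end TailExpectation

theorem condExp_comap_ae_eq_integral {Ω : Type*} [MeasurableSpace Ω] {μ : Measure Ω}
    [IsProbabilityMeasure μ] {R S : Ω → ℝ} (hR : Integrable R μ) (hS : Measurable S)
    (h : ∀ t, ∫ ω in {ω | t < S ω}, R ω ∂μ = (∫ ω, R ω ∂μ) * μ.real {ω | t < S ω}) :
    μ[R | MeasurableSpace.comap S (borel ℝ)] =ᵐ[μ] fun _ => ∫ ω, R ω ∂μ := by
  have hm : MeasurableSpace.comap S (borel ℝ) ≤ ‹_› := by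
    rw [← BorelSpace.measurable_eq]; exact hS.comap_le
  have hvec : (μ.withDensityᵥ R).map S = (μ.withDensityᵥ fun _ => ∫ ω, R ω ∂μ).map S := by
    refine VectorMeasure.ext_of_generateFrom (range Ioi) ?_
      (BorelSpace.measurable_eq.trans (borel_eq_generateFrom_Ioi ℝ)) isPiSystem_Ioi ?_
    · rintro _ ⟨t, rfl⟩
      rw [VectorMeasure.map_apply _ hS measurableSet_Ioi,
        VectorMeasure.map_apply _ hS measurableSet_Ioi,
        withDensityᵥ_apply hR (hS measurableSet_Ioi), withDensityᵥ_apply (integrable_const _) (hS measurableSet_Ioi), setIntegral_const,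
        smul_eq_mul, mul_comm]
      exact h t
    · rw [VectorMeasure.map_apply _ hS MeasurableSet.univ,
        VectorMeasure.map_apply _ hS MeasurableSet.univ, withDensityᵥ_apply hR (hS .univ),
        withDensityᵥ_apply (integrable_const _) (hS .univ)]
      simp
  refine (ae_eq_condExp_of_forall_setIntegral_eq hm hR (fun _ _ _ => integrableOn_const)
    ?_ aestronglyMeasurable_const).symm
  rintro _ ⟨B, hB, rfl⟩ _
  have := congrArg (fun ν : VectorMeasure ℝ ℝ => ν B) hvec
  simp only [VectorMeasure.map_apply _ hS hB] at this
  rwa [withDensityᵥ_apply hR (hS hB), withDensityᵥ_apply (integrable_const _) (hS hB),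
    eq_comm] at this

theorem setIntegral_lt_eq_integral_mul_of_tail_cov_zero {Ω : Type*} [MeasurableSpace Ω]
    {μ : Measure Ω} [IsProbabilityMeasure μ] {R S : Ω → ℝ} {C : ℝ}
    (hSi : Integrable S μ) (hS : Measurable S) (hSpos : ∀ ω, 0 < S ω)
    (hP : ∀ u : ℝ, 0 ≤ u → 0 < μ {ω | u < S ω}) (hR : Measurable R) (hRC : ∀ ω, |R ω| ≤ C)
    (hcov : ∀ u : ℝ, 0 ≤ u →
      (∫ ω in {ω | u < S ω}, R ω * S ω ∂μ) * μ.real {ω | u < S ω} =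
        (∫ ω in {ω | u < S ω}, R ω ∂μ) * (∫ ω in {ω | u < S ω}, S ω ∂μ)) (t : ℝ) :
    ∫ ω in {ω | t < S ω}, R ω ∂μ = (∫ ω, R ω ∂μ) * μ.real {ω | t < S ω} := by
  have hRi : Integrable R μ :=
    .of_bound hR.aestronglyMeasurable C (Eventually.of_forall hRC)
  have hone : ∀ t, ∫ ω in {ω | t < S ω}, (1 : ℝ) ∂μ = μ.real {ω | t < S ω} := by simp
  have hS1 := setIntegral_mul_eq_add_integral_Ioi (R := fun _ => (1 : ℝ)) (C := 1) hSi hS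
    measurable_const (by simp)
  simp only [one_mul, hone] at hS1
  have hpi : IntegrableOn (fun t => μ.real {ω | t < S ω}) (Ioi 0) := by
    simpa only [hone] using
      integrableOn_setIntegral_lt (R := fun _ => (1 : ℝ)) (C := 1) hSi hS measurable_const
        (by simp) 0
  have htail : ∀ u : ℝ, 0 ≤ u →
      (∫ t in Ioi u, ∫ ω in {ω | t < S ω}, R ω ∂μ) * μ.real {ω | u < S ω} =
        (∫ ω in {ω | u < S ω}, R ω ∂μ) * ∫ t in Ioi u, μ.real {ω | t < S ω} := fun u hu => by
    have := hcov u hu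
    rw [setIntegral_mul_eq_add_integral_Ioi hSi hS hR hRC, hS1] at this
    linear_combination this
  obtain ⟨k, hk⟩ := exists_eq_const_mul_of_integral_Ioi_mul_eq
    (integrableOn_setIntegral_lt hSi hS hR hRC 0) hpi
    (fun x _ => (continuousWithinAt_setIntegral_lt hRi hS x).mono Ioi_subset_Ici_self)
    (fun x _ => by
      simpa only [hone] using
        (continuousWithinAt_setIntegral_lt (integrable_const (μ := μ) 1) hS x).mono
          Ioi_subset_Ici_self)
    (fun t ht => integral_Ioi_pos_of_pos (hpi.mono_set (Ioi_subset_Ioi ht)) fun s hs =>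
      ENNReal.toReal_pos (hP s (ht.trans hs.le)).ne' (measure_ne_top μ _))
    htail
  have huniv : ∀ t : ℝ, t ≤ 0 → {ω | t < S ω} = univ := fun t ht =>
    eq_univ_of_forall fun ω => ht.trans_lt (hSpos ω)
  have hk0 : k = ∫ ω, R ω ∂μ := by simpa [huniv 0 le_rfl] using (hk 0 le_rfl).symm
  rcases le_or_gt t 0 with ht | ht
  · simp [huniv t ht]
  · rw [← hk0]
    exact hk t ht.le

/-- If the conditional covariance of a bounded `R` and a positive integrable `S` given each
tail event `{S > u}`, `u ≥ 0`, vanishes, then `𝔼[R | σ(S)] = 𝔼[R]` a.s.; in particular, if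
`R = X/S` with `0 ≤ X ≤ S` integrable, then `𝔼[X/S | σ(S)] = 𝔼[X]/𝔼[S]` a.s. -/
theorem condexp_const_of_tail_cov_zero
    {Ω : Type*} [MeasurableSpace Ω] (μ : Measure Ω) [IsProbabilityMeasure μ]
    (S : Ω → ℝ) (hSmeas : Measurable S) (hSpos : ∀ ω, 0 < S ω) (hSint : Integrable S μ)
    (hP : ∀ u : ℝ, 0 ≤ u → 0 < μ {ω | u < S ω})
    (R : Ω → ℝ) (hRmeas : Measurable R) (C : ℝ) (hRbd : ∀ ω, |R ω| ≤ C)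
    (hcov : ∀ u : ℝ, 0 ≤ u →
      (∫ ω in {ω | u < S ω}, R ω * S ω ∂μ) * (μ {ω | u < S ω}).toReal =
        (∫ ω in {ω | u < S ω}, R ω ∂μ) * (∫ ω in {ω | u < S ω}, S ω ∂μ)) :
    (μ[R | MeasurableSpace.comap S (borel ℝ)] =ᵐ[μ] fun _ => ∫ ω, R ω ∂μ) ∧
      (∀ X : Ω → ℝ, Integrable X μ → (∀ ω, 0 ≤ X ω ∧ X ω ≤ S ω) →
        R = (fun ω => X ω / S ω) →
        μ[R | MeasurableSpace.comap S (borel ℝ)] =ᵐ[μ]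
          fun _ => (∫ ω, X ω ∂μ) / (∫ ω, S ω ∂μ)) := by
  have hRi : Integrable R μ :=
    .of_bound hRmeas.aestronglyMeasurable C (Eventually.of_forall hRbd)
  have hmain := condExp_comap_ae_eq_integral hRi hSmeas
    (setIntegral_lt_eq_integral_mul_of_tail_cov_zero hSint hSmeas hSpos hP hRmeas hRbd hcov)
  refine ⟨hmain, fun X _ _ hRX => ?_⟩
  have hES : 0 < ∫ ω, S ω ∂μ :=
    (integral_pos_iff_support_of_nonneg (fun ω => (hSpos ω).le) hSint).2 (by
      simp [Function.support_eq_univ fun ω => (hSpos ω).ne'])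
  have hRS : ∀ ω, R ω * S ω = X ω := fun ω => by
    rw [hRX, div_mul_cancel₀ _ (hSpos ω).ne']
  have h0 := hcov 0 le_rfl
  have huniv : {ω | 0 < S ω} = univ := eq_univ_of_forall hSpos
  simp only [huniv, Measure.restrict_univ, measure_univ, ENNReal.toReal_one, mul_one, hRS] at h0
  rwa [h0, mul_div_cancel_right₀ _ hES.ne']
end

section
/- Let X and S be positive integrable random variables on a probability space with 0 ≤ X ≤ S. Then 𝔼[X | σ(S)] = (𝔼[X]/𝔼[S])·S almost surely if and only if for every real t > 0, 𝔼[X·e^{−tS}]/𝔼[X] = 𝔼[S·e^{−tS}]/𝔼[S]. -/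
/-!
Forward direction: `e^{-tS}` is `σ(S)`-measurable, so the tower property gives
`𝔼[X e^{-tS}] = 𝔼[𝔼[X | σ(S)] e^{-tS}] = c 𝔼[S e^{-tS}]` with `c = 𝔼[X]/𝔼[S]`.

Converse: the hypothesis says that the finite measures `A ↦ 𝔼[X; S ∈ A]` and `A ↦ c 𝔼[S; S ∈ A]`
on `[0, ∞)` have the same Laplace transform (at `t = 0` both have mass `𝔼[X]`). The kernels
`x ↦ e^{-tx}`, `t ≥ 0`, span a point-separating algebra of bounded continuous functions, which
separates finite measures on a Polish space; so the two measures agree, and this is exactly the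
defining property of `𝔼[X | σ(S)] = c S`.
-/

open MeasureTheory Set
open scoped NNReal BoundedContinuousFunction

noncomputable def laplaceKernel (t : ℝ≥0) : ℝ≥0 →ᵇ ℝ :=
  .ofNormedAddCommGroup (fun x => Real.exp (-(t * x))) (by fun_prop) 1 fun x => by
    rw [Real.norm_eq_abs, Real.abs_exp, Real.exp_le_one_iff, neg_nonpos]
    positivity

@[simp]
lemma laplaceKernel_apply (t x : ℝ≥0) : laplaceKernel t x = Real.exp (-(t * x)) := rfl

noncomputable def laplaceKernels : Submonoid (ℝ≥0 →ᵇ ℝ) where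
  carrier := range laplaceKernel
  mul_mem' := by
    rintro _ _ ⟨s, rfl⟩ ⟨t, rfl⟩
    exact ⟨s + t, by ext x; simp [add_mul, Real.exp_add, mul_comm]⟩
  one_mem' := ⟨0, by ext x; simp⟩

theorem MeasureTheory.Measure.ext_of_laplace {P P' : Measure ℝ≥0} [IsFiniteMeasure P]
    [IsFiniteMeasure P']
    (h : ∀ t : ℝ≥0, ∫ x, Real.exp (-(t * x)) ∂P = ∫ x, Real.exp (-(t * x)) ∂P') : P = P' := by
  refine ext_of_forall_mem_subalgebra_integral_eq_of_polish
    (A := StarAlgebra.adjoin ℝ (laplaceKernels : Set (ℝ≥0 →ᵇ ℝ))) ?_ ?_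
  · intro x y hxy
    refine ⟨_, ⟨_, ⟨laplaceKernel 1, StarAlgebra.subset_adjoin ℝ _ ⟨1, rfl⟩, rfl⟩, rfl⟩, ?_⟩
    simpa using hxy
  · intro g hg
    have hspan : g ∈ Submodule.span ℝ (laplaceKernels : Set (ℝ≥0 →ᵇ ℝ)) := by
      have hstar : star (laplaceKernels : Set (ℝ≥0 →ᵇ ℝ)) = laplaceKernels := by
        ext f
        simp [show star f = f by ext; simp]
      change g ∈ Subalgebra.toSubmodule (StarAlgebra.adjoin ℝ _).toSubalgebra at hg
      rwa [StarAlgebra.adjoin_eq_span, hstar, union_self, Submonoid.closure_eq] at hg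
    clear hg
    induction hspan using Submodule.span_induction with
    | mem _ hk => obtain ⟨t, rfl⟩ := hk; simpa using h t
    | zero => simp
    | add f g _ _ hf hg =>
      simp only [BoundedContinuousFunction.coe_add, Pi.add_apply]
      rw [integral_add (f.integrable P) (g.integrable P),
        integral_add (f.integrable P') (g.integrable P'), hf, hg]
    | smul a f _ hf => simp [integral_const_mul, hf]

section

variable {Ω E : Type*} {m m₀ : MeasurableSpace Ω} [MeasurableSpace E] {μ : Measure Ω}

lemma integral_pos_of_forall_pos [NeZero μ] {f : Ω → ℝ} (hf : Integrable f μ)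
    (hpos : ∀ ω, 0 < f ω) : 0 < ∫ ω, f ω ∂μ := by
  rw [integral_pos_iff_support_of_nonneg (fun ω => (hpos ω).le) hf,
    eq_univ_of_forall (s := Function.support f) fun ω => (hpos ω).ne']
  exact (NeZero.ne _).bot_lt

lemma MeasureTheory.Integrable.mul_exp_neg_mul {W S : Ω → ℝ} (hW : Integrable W μ)
    (hS : AEMeasurable S μ) (hS0 : ∀ ω, 0 ≤ S ω) {t : ℝ} (ht : 0 ≤ t) :
    Integrable (fun ω => W ω * Real.exp (-t * S ω)) μ := by
  refine hW.mul_bdd (by fun_prop) (c := 1) (.of_forall fun ω => ?_)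
  rw [Real.norm_eq_abs, Real.abs_exp, Real.exp_le_one_iff, neg_mul, neg_nonpos]
  exact mul_nonneg ht (hS0 ω)

lemma integral_mul_eq_of_condExp_ae_eq (hm : m ≤ m₀) [SigmaFinite (μ.trim hm)] {f g e : Ω → ℝ}
    (hfg : μ[f | m] =ᵐ[μ] g) (he : StronglyMeasurable[m] e) (hfe : Integrable (f * e) μ)
    (hf : Integrable f μ) : ∫ ω, f ω * e ω ∂μ = ∫ ω, g ω * e ω ∂μ :=
  calc ∫ ω, f ω * e ω ∂μ = ∫ ω, μ[f * e | m] ω ∂μ := (integral_condExp hm).symm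
    _ = ∫ ω, g ω * e ω ∂μ := integral_congr_ae <|
      (condExp_mul_of_stronglyMeasurable_right he hfe hf).trans (hfg.mul .rfl)

lemma integral_map_withDensity_ofReal {W : Ω → ℝ} (hW : AEMeasurable W μ) (hW0 : 0 ≤ᵐ[μ] W)
    {φ : Ω → E} (hφ : Measurable φ) {f : E → ℝ} (hf : Measurable f) :
    ∫ x, f x ∂(μ.withDensity fun ω => ENNReal.ofReal (W ω)).map φ = ∫ ω, W ω * f (φ ω) ∂μ := by
  rw [integral_map hφ.aemeasurable hf.aestronglyMeasurable,
    integral_withDensity_eq_integral_toReal_smul₀ hW.ennreal_ofReal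
      (.of_forall fun _ => ENNReal.ofReal_lt_top)]
  refine integral_congr_ae (hW0.mono fun ω hω => ?_)
  simp [ENNReal.toReal_ofReal hω]

theorem setIntegral_preimage_eq_of_laplace {W W' S : Ω → ℝ} (hW : Integrable W μ)
    (hW' : Integrable W' μ) (hW0 : 0 ≤ᵐ[μ] W) (hW'0 : 0 ≤ᵐ[μ] W') (hS : Measurable S)
    (hS0 : ∀ ω, 0 ≤ S ω)
    (h : ∀ t : ℝ, 0 ≤ t →
      ∫ ω, W ω * Real.exp (-t * S ω) ∂μ = ∫ ω, W' ω * Real.exp (-t * S ω) ∂μ)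
    {B : Set ℝ} (hB : MeasurableSet B) :
    ∫ ω in S ⁻¹' B, W ω ∂μ = ∫ ω in S ⁻¹' B, W' ω ∂μ := by
  set T : Ω → ℝ≥0 := fun ω => (S ω).toNNReal
  have hT : Measurable T := hS.real_toNNReal
  have hST : ∀ ω, (T ω : ℝ) = S ω := fun ω => Real.coe_toNNReal _ (hS0 ω)
  have := isFiniteMeasure_withDensity_ofReal hW.2
  have := isFiniteMeasure_withDensity_ofReal hW'.2
  have hlaw : (μ.withDensity fun ω => ENNReal.ofReal (W ω)).map T =
      (μ.withDensity fun ω => ENNReal.ofReal (W' ω)).map T := by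
    refine Measure.ext_of_laplace fun t => ?_
    rw [integral_map_withDensity_ofReal hW.aemeasurable hW0 hT (by fun_prop),
      integral_map_withDensity_ofReal hW'.aemeasurable hW'0 hT (by fun_prop)]
    simpa [hST] using h t t.2
  have hset : ∀ V : Ω → ℝ, AEMeasurable V μ → 0 ≤ᵐ[μ] V → ∫ ω in S ⁻¹' B, V ω ∂μ =
      ∫ x, (((↑) : ℝ≥0 → ℝ) ⁻¹' B).indicator 1 x
        ∂(μ.withDensity fun ω => ENNReal.ofReal (V ω)).map T := by
    intro V hV hV0
    rw [integral_map_withDensity_ofReal (f := (NNReal.toReal ⁻¹' B).indicator 1) hV hV0 hT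
      (measurable_const.indicator (measurable_coe_nnreal_real hB)),
      ← integral_indicator (hS hB)]
    congr 1
    ext ω
    by_cases hω : S ω ∈ B <;> simp [hST, hω]
  rw [hset W hW.aemeasurable hW0, hset W' hW'.aemeasurable hW'0, hlaw]

end

theorem condexp_linear_iff_laplace_general
    {Ω : Type*} [MeasurableSpace Ω] (μ : Measure Ω) [IsProbabilityMeasure μ]
    (X S : Ω → ℝ) (hSmeas : Measurable S)
    (hXpos : ∀ ω, 0 < X ω) (hSpos : ∀ ω, 0 < S ω)
    (hXint : Integrable X μ) (hSint : Integrable S μ) :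
    (μ[X | MeasurableSpace.comap S (borel ℝ)] =ᵐ[μ]
        fun ω => ((∫ ω, X ω ∂μ) / (∫ ω, S ω ∂μ)) * S ω) ↔
      (∀ t : ℝ, 0 < t →
        (∫ ω, X ω * Real.exp (-t * S ω) ∂μ) / (∫ ω, X ω ∂μ) =
          (∫ ω, S ω * Real.exp (-t * S ω) ∂μ) / (∫ ω, S ω ∂μ)) := by
  have hm : MeasurableSpace.comap S (borel ℝ) ≤ _ := hSmeas.comap_le
  have hSm : Measurable[MeasurableSpace.comap S (borel ℝ)] S := comap_measurable S
  have hS0 : ∀ ω, 0 ≤ S ω := fun ω => (hSpos ω).le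
  have hIX := integral_pos_of_forall_pos hXint hXpos
  have hIS := integral_pos_of_forall_pos hSint hSpos
  set c := (∫ ω, X ω ∂μ) / (∫ ω, S ω ∂μ) with hc
  have hcS (t : ℝ) : ∫ ω, c * S ω * Real.exp (-t * S ω) ∂μ =
      c * ∫ ω, S ω * Real.exp (-t * S ω) ∂μ := by
    simp_rw [mul_assoc, integral_const_mul]
  constructor
  · intro h t ht
    have he : Measurable[MeasurableSpace.comap S (borel ℝ)] fun ω => Real.exp (-t * S ω) := by
      fun_prop
    rw [integral_mul_eq_of_condExp_ae_eq hm h he.stronglyMeasurable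
        (hXint.mul_exp_neg_mul hSmeas.aemeasurable hS0 ht.le) hXint,
      hcS, hc, div_mul_comm, mul_div_assoc, div_self hIX.ne', mul_one]
  · intro h
    have hlaplace (t : ℝ) (ht : 0 ≤ t) : ∫ ω, c * S ω * Real.exp (-t * S ω) ∂μ =
        ∫ ω, X ω * Real.exp (-t * S ω) ∂μ := by
      rcases ht.eq_or_lt with rfl | ht
      · simp [integral_const_mul, hc, hIS.ne']
      · rw [hcS, hc, div_mul_eq_mul_div, div_eq_iff hIS.ne', mul_comm,
          ← div_eq_div_iff hIS.ne' hIX.ne']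
        exact (h t ht).symm
    refine (ae_eq_condExp_of_forall_setIntegral_eq hm hXint
      (fun _ _ _ => (hSint.const_mul c).integrableOn) ?_
      (hSm.const_mul c).aestronglyMeasurable).symm
    rintro _ ⟨B, hB, rfl⟩ -
    have hc0 : 0 ≤ c := (div_pos hIX hIS).le
    exact setIntegral_preimage_eq_of_laplace (hSint.const_mul c) hXint
      (.of_forall fun ω => mul_nonneg hc0 (hS0 ω)) (.of_forall fun ω => (hXpos ω).le)
      hSmeas hS0 hlaplace hB

/-- `𝔼[X | σ(S)] = (𝔼[X]/𝔼[S])·S` a.s. iff the Laplace transforms of the size-biased versions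
agree: `𝔼[X e^{−tS}]/𝔼[X] = 𝔼[S e^{−tS}]/𝔼[S]` for all `t > 0`. -/
theorem condexp_linear_iff_laplace
    {Ω : Type*} [MeasurableSpace Ω] (μ : Measure Ω) [IsProbabilityMeasure μ]
    (X S : Ω → ℝ) (hXmeas : Measurable X) (hSmeas : Measurable S)
    (hXpos : ∀ ω, 0 < X ω) (hSpos : ∀ ω, 0 < S ω) (hXS : ∀ ω, X ω ≤ S ω)
    (hXint : Integrable X μ) (hSint : Integrable S μ) :
    (μ[X | MeasurableSpace.comap S (borel ℝ)] =ᵐ[μ]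
        fun ω => ((∫ ω, X ω ∂μ) / (∫ ω, S ω ∂μ)) * S ω) ↔
      (∀ t : ℝ, 0 < t →
        (∫ ω, X ω * Real.exp (-t * S ω) ∂μ) / (∫ ω, X ω ∂μ) =
          (∫ ω, S ω * Real.exp (-t * S ω) ∂μ) / (∫ ω, S ω ∂μ)) :=
  condexp_linear_iff_laplace_general μ X S hSmeas hXpos hSpos hXint hSint
end

section
/- Let (X_1, …, X_n) and (Y_{n+1}, …, Y_{n+m}) be two independent random vectors with positive integrable coordinates, let S_X := X_1 + ⋯ + X_n, S_Y := Y_{n+1} + ⋯ + Y_{n+m}, S_+ := S_X + S_Y, and suppose that for all i ≠ j in {1,…,n} and all t > 0, 𝔼[X_i e^{−tS_X}]/𝔼[X_i] = 𝔼[X_j e^{−tS_X}]/𝔼[X_j], and for all i ≠ j in {n+1,…,n+m} and all t > 0, 𝔼[Y_i e^{−tS_Y}]/𝔼[Y_i] = 𝔼[Y_j e^{−tS_Y}]/𝔼[Y_j]. Denote the merged portfolio coordinates by Z_1, …, Z_{n+m}. Then [for all i ≠ j in {1,…,n+m} and all t > 0, 𝔼[Z_i e^{−tS_+}]/𝔼[Z_i]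 = 𝔼[Z_j e^{−tS_+}]/𝔼[Z_j]] holds if and only if for all i ∈ {1,…,n}, j ∈ {n+1,…,n+m} and all t > 0, (𝔼[X_i e^{−tS_X}]/𝔼[X_i]) · 𝔼[e^{−tS_Y}] = (𝔼[Y_j e^{−tS_Y}]/𝔼[Y_j]) · 𝔼[e^{−tS_X}]. -/
open MeasureTheory

/-! Independence factorises `𝔼[X_i e^{-t S_+}]` as `𝔼[X_i e^{-t S_X}] · 𝔼[e^{-t S_Y}]`, so the
size-biased Laplace ratio of a coordinate of the merged portfolio is its own ratio times the
Laplace transform of the other aggregate. Within each portfolio these products already agree, so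
the merged ratios all agree exactly when they agree across the two portfolios. -/

theorem forall_ne_eq_iff_of_castAdd_natAdd {α β : Type*} {n m : ℕ} {p : β → Prop}
    {c : Fin (n + m) → β → α} {a : Fin n → β → α} {b : Fin m → β → α}
    (hca : ∀ i t, c (Fin.castAdd m i) t = a i t) (hcb : ∀ j t, c (Fin.natAdd n j) t = b j t)
    (ha : ∀ i j, i ≠ j → ∀ t, p t → a i t = a j t)
    (hb : ∀ i j, i ≠ j → ∀ t, p t → b i t = b j t) :
    (∀ i j, i ≠ j → ∀ t, p t → c i t = c j t) ↔ ∀ i j t, p t → a i t = b j t := by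
  constructor
  · intro h i j t ht
    have hne : Fin.castAdd m i ≠ Fin.natAdd n j :=
      Fin.ne_of_val_ne (by simp only [Fin.val_castAdd, Fin.val_natAdd]; omega)
    simpa only [hca, hcb] using h _ _ hne t ht
  · intro h i j hij t ht
    induction i using Fin.addCases with
    | left i =>
      induction j using Fin.addCases with
      | left j => simpa only [hca] using ha i j (fun he => hij (he ▸ rfl)) t ht
      | right j => simpa only [hca, hcb] using h i j t ht
    | right i =>
      induction j using Fin.addCases with
      | left j => simpa only [hca, hcb] using (h j i t ht).symm
      | right j => simpa only [hcb] using hb i j (fun he => hij (he ▸ rfl)) t ht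

theorem integral_mul_exp_neg_sum_add_sum {Ω ι κ : Type*} [MeasurableSpace Ω] {μ : Measure Ω}
    [Fintype ι] [Fintype κ] {X : ι → Ω → ℝ} {Y : κ → Ω → ℝ}
    (hX : ∀ i, Measurable (X i)) (hY : ∀ j, Measurable (Y j))
    (hindep : ProbabilityTheory.IndepFun (fun ω i => X i ω) (fun ω j => Y j ω) μ)
    (i : ι) (t : ℝ) :
    ∫ ω, X i ω * Real.exp (-t * ((∑ k, X k ω) + ∑ k, Y k ω)) ∂μ =
      (∫ ω, X i ω * Real.exp (-t * ∑ k, X k ω) ∂μ) * ∫ ω, Real.exp (-t * ∑ k, Y k ω) ∂μ := by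
  have hXY : ProbabilityTheory.IndepFun (fun ω => X i ω * Real.exp (-t * ∑ k, X k ω))
      (fun ω => Real.exp (-t * ∑ k, Y k ω)) μ :=
    hindep.comp (φ := fun v : ι → ℝ => v i * Real.exp (-t * ∑ k, v k))
      (ψ := fun v : κ → ℝ => Real.exp (-t * ∑ k, v k)) (by fun_prop) (by fun_prop)
  rw [← hXY.integral_fun_mul_eq_mul_integral (by fun_prop) (by fun_prop)]
  simp only [mul_add, Real.exp_add, mul_assoc]

theorem merged_mem_W_iff_laplace_ratio_general
    {Ω : Type*} [MeasurableSpace Ω] (μ : Measure Ω)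
    (n m : ℕ) (X : Fin n → Ω → ℝ) (Y : Fin m → Ω → ℝ)
    (hXmeas : ∀ i, Measurable (X i)) (hYmeas : ∀ j, Measurable (Y j))
    (hindep : ProbabilityTheory.IndepFun
      (fun ω => fun i => X i ω) (fun ω => fun j => Y j ω) μ)
    (SX SY Splus : Ω → ℝ)
    (hSX : SX = fun ω => ∑ i, X i ω) (hSY : SY = fun ω => ∑ j, Y j ω)
    (hSplus : Splus = fun ω => SX ω + SY ω)
    (hXW : ∀ i j, i ≠ j → ∀ t : ℝ, 0 < t →
      (∫ ω, X i ω * Real.exp (-t * SX ω) ∂μ) / (∫ ω, X i ω ∂μ) =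
        (∫ ω, X j ω * Real.exp (-t * SX ω) ∂μ) / (∫ ω, X j ω ∂μ))
    (hYW : ∀ i j, i ≠ j → ∀ t : ℝ, 0 < t →
      (∫ ω, Y i ω * Real.exp (-t * SY ω) ∂μ) / (∫ ω, Y i ω ∂μ) =
        (∫ ω, Y j ω * Real.exp (-t * SY ω) ∂μ) / (∫ ω, Y j ω ∂μ))
    (Z : Fin (n + m) → Ω → ℝ) (hZ : Z = Fin.append X Y) :
    (∀ i j : Fin (n + m), i ≠ j → ∀ t : ℝ, 0 < t →
        (∫ ω, Z i ω * Real.exp (-t * Splus ω) ∂μ) / (∫ ω, Z i ω ∂μ) =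
          (∫ ω, Z j ω * Real.exp (-t * Splus ω) ∂μ) / (∫ ω, Z j ω ∂μ)) ↔
      (∀ (i : Fin n) (j : Fin m), ∀ t : ℝ, 0 < t →
        ((∫ ω, X i ω * Real.exp (-t * SX ω) ∂μ) / (∫ ω, X i ω ∂μ)) *
            (∫ ω, Real.exp (-t * SY ω) ∂μ) =
          ((∫ ω, Y j ω * Real.exp (-t * SY ω) ∂μ) / (∫ ω, Y j ω ∂μ)) *
            (∫ ω, Real.exp (-t * SX ω) ∂μ)) := by
  subst hSplus hSX hSY hZ
  refine forall_ne_eq_iff_of_castAdd_natAdd (fun i t => ?_) (fun j t => ?_)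
    (fun i j hij t ht => by rw [hXW i j hij t ht]) (fun i j hij t ht => by rw [hYW i j hij t ht])
  · simp only [Fin.append_left]
    rw [integral_mul_exp_neg_sum_add_sum hXmeas hYmeas hindep, mul_div_right_comm]
  · simp only [Fin.append_right, add_comm (∑ k, X k _)]
    rw [integral_mul_exp_neg_sum_add_sum hYmeas hXmeas hindep.symm, mul_div_right_comm]

/-- Merging two independent portfolios, each in `𝔚` (expressed via equality of the Laplace
transforms of their partially size-biased aggregates): the merged portfolio is in `𝔚` iff the
cross-portfolio Laplace compatibility condition holds. -/
theorem merged_mem_W_iff_laplace_ratio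
    {Ω : Type*} [MeasurableSpace Ω] (μ : Measure Ω) [IsProbabilityMeasure μ]
    (n m : ℕ) (X : Fin n → Ω → ℝ) (Y : Fin m → Ω → ℝ)
    (hXmeas : ∀ i, Measurable (X i)) (hYmeas : ∀ j, Measurable (Y j))
    (hXpos : ∀ i ω, 0 < X i ω) (hYpos : ∀ j ω, 0 < Y j ω)
    (hXint : ∀ i, Integrable (X i) μ) (hYint : ∀ j, Integrable (Y j) μ)
    (hindep : ProbabilityTheory.IndepFun
      (fun ω => fun i => X i ω) (fun ω => fun j => Y j ω) μ)
    (SX SY Splus : Ω → ℝ)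
    (hSX : SX = fun ω => ∑ i, X i ω) (hSY : SY = fun ω => ∑ j, Y j ω)
    (hSplus : Splus = fun ω => SX ω + SY ω)
    (hXW : ∀ i j, i ≠ j → ∀ t : ℝ, 0 < t →
      (∫ ω, X i ω * Real.exp (-t * SX ω) ∂μ) / (∫ ω, X i ω ∂μ) =
        (∫ ω, X j ω * Real.exp (-t * SX ω) ∂μ) / (∫ ω, X j ω ∂μ))
    (hYW : ∀ i j, i ≠ j → ∀ t : ℝ, 0 < t →
      (∫ ω, Y i ω * Real.exp (-t * SY ω) ∂μ) / (∫ ω, Y i ω ∂μ) =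
        (∫ ω, Y j ω * Real.exp (-t * SY ω) ∂μ) / (∫ ω, Y j ω ∂μ))
    (Z : Fin (n + m) → Ω → ℝ) (hZ : Z = Fin.append X Y) :
    (∀ i j : Fin (n + m), i ≠ j → ∀ t : ℝ, 0 < t →
        (∫ ω, Z i ω * Real.exp (-t * Splus ω) ∂μ) / (∫ ω, Z i ω ∂μ) =
          (∫ ω, Z j ω * Real.exp (-t * Splus ω) ∂μ) / (∫ ω, Z j ω ∂μ)) ↔
      (∀ (i : Fin n) (j : Fin m), ∀ t : ℝ, 0 < t →
        ((∫ ω, X i ω * Real.exp (-t * SX ω) ∂μ) / (∫ ω, X i ω ∂μ)) *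
            (∫ ω, Real.exp (-t * SY ω) ∂μ) =
          ((∫ ω, Y j ω * Real.exp (-t * SY ω) ∂μ) / (∫ ω, Y j ω ∂μ)) *
            (∫ ω, Real.exp (-t * SX ω) ∂μ)) :=
  merged_mem_W_iff_laplace_ratio_general μ n m X Y hXmeas hYmeas hindep SX SY Splus hSX hSY hSplus
    hXW hYW Z hZ
end

section
/- Let Z be a positive integrable random variable, let b > 0 be a constant, and let (Y_1, …, Y_n) be a random vector with nonnegative coordinates satisfying Y_1 + ⋯ + Y_n = b almost surely, with (Y_1, …, Y_n) independent of Z. Define X_i := Y_i · Z for i = 1,…,n and S := X_1 + ⋯ + X_n (= b·Z). Then, for every q ∈ [0,1) with ℙ(S > s_q) > 0 and every i ∈ {1,…,n}, r_{q,i} = r̃_{q,i}. -/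
/-!
Since `Y₁ + ⋯ + Yₙ = b`, the aggregate is `S = b Z` almost surely, so the tail event
`{S > s_q}` is, up to a null set, the event `{Z > s_q / b}` determined by `Z` alone, and on it
`Xᵢ / S = Yᵢ / b`. Independence of `Yᵢ` and `Z` then factors `𝔼[Yᵢ] / b` out of the numerators of
both allocations, and what remains cancels against their denominators
(`b 𝔼[Z 1{Z > s_q / b}]` and `ℙ(Z > s_q / b)`), so both allocations equal `𝔼[Yᵢ] / b`.
-/

open MeasureTheory Set

open ProbabilityTheory

theorem ProbabilityTheory.IndepFun.setIntegral_preimage_mul {Ω β : Type*} [MeasurableSpace Ω]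
    [MeasurableSpace β] {μ : Measure Ω} {Y : Ω → ℝ} {Z : Ω → β} (hYZ : IndepFun Y Z μ)
    (hY : AEStronglyMeasurable Y μ) (hZ : Measurable Z) {h : β → ℝ} (hh : Measurable h)
    {B : Set β} (hB : MeasurableSet B) :
    ∫ ω in Z ⁻¹' B, Y ω * h (Z ω) ∂μ = μ[Y] * ∫ ω in Z ⁻¹' B, h (Z ω) ∂μ := by
  have hindep : IndepFun Y (B.indicator h ∘ Z) μ := hYZ.comp measurable_id (hh.indicator hB)
  rw [← integral_indicator (hZ hB), ← integral_indicator (hZ hB)]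
  simp only [indicator_mul_right, ← Function.comp_apply (f := h), indicator_comp_right]
  exact hindep.integral_fun_mul_eq_mul_integral hY ((hh.indicator hB).comp hZ).aestronglyMeasurable

section

variable {Ω : Type*} [MeasurableSpace Ω] {μ : Measure Ω} {Y Z S : Ω → ℝ} {b q : ℝ}

theorem tailSet_ae_eq_preimage_Ioi (hb : 0 < b) (hS : S =ᵐ[μ] fun ω => b * Z ω) :
    tailSet μ S q =ᵐ[μ] Z ⁻¹' Ioi (VaR μ S q / b) := by
  filter_upwards [hS] with ω hω
  change (VaR μ S q < S ω) = (VaR μ S q / b < Z ω)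
  rw [hω, div_lt_iff₀ hb, mul_comm]

theorem cteAlloc_mul_of_ae_eq_const_mul (hb : 0 < b) (hS : S =ᵐ[μ] fun ω => b * Z ω)
    (hY : AEStronglyMeasurable Y μ) (hZ : Measurable Z) (hZpos : ∀ ω, 0 < Z ω)
    (hZint : Integrable Z μ) (hYZ : IndepFun Y Z μ) (htail : 0 < μ (tailSet μ S q)) :
    cteAlloc μ (fun ω => Y ω * Z ω) S q = μ[Y] / b := by
  have hT := tailSet_ae_eq_preimage_Ioi (q := q) hb hS
  set T := Z ⁻¹' Ioi (VaR μ S q / b)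
  have hZT : 0 < ∫ ω in T, Z ω ∂μ := by
    rw [setIntegral_pos_iff_support_of_nonneg_ae (ae_of_all _ fun ω => (hZpos ω).le)
      hZint.integrableOn, inter_eq_right.mpr fun ω _ => Function.mem_support.mpr (hZpos ω).ne',
      ← measure_congr hT]
    exact htail
  have hnum : ∫ ω in tailSet μ S q, Y ω * Z ω ∂μ = μ[Y] * ∫ ω in T, Z ω ∂μ := by
    rw [setIntegral_congr_set hT]
    exact hYZ.setIntegral_preimage_mul hY hZ measurable_id measurableSet_Ioi
  have hden : ∫ ω in tailSet μ S q, S ω ∂μ = b * ∫ ω in T, Z ω ∂μ := by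
    rw [setIntegral_congr_set hT, integral_congr_ae (ae_restrict_of_ae hS), integral_const_mul]
  rw [cteAlloc, hnum, hden]
  field_simp

theorem gteAlloc_mul_of_ae_eq_const_mul [IsFiniteMeasure μ] (hb : 0 < b)
    (hS : S =ᵐ[μ] fun ω => b * Z ω) (hY : AEStronglyMeasurable Y μ) (hZ : Measurable Z)
    (hZne : ∀ ω, Z ω ≠ 0) (hYZ : IndepFun Y Z μ) (htail : 0 < μ (tailSet μ S q)) :
    gteAlloc μ (fun ω => Y ω * Z ω) S q = μ[Y] / b := by
  have hT := tailSet_ae_eq_preimage_Ioi (q := q) hb hS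
  set T := Z ⁻¹' Ioi (VaR μ S q / b)
  have hratio : (fun ω => Y ω * Z ω / S ω) =ᵐ[μ] fun ω => Y ω * b⁻¹ := by
    filter_upwards [hS] with ω hω
    rw [hω]
    field_simp [hZne ω]
  have hnum : ∫ ω in tailSet μ S q, Y ω * Z ω / S ω ∂μ = μ[Y] * (μ.real T * b⁻¹) := by
    rw [setIntegral_congr_set hT, integral_congr_ae (ae_restrict_of_ae hratio),
      hYZ.setIntegral_preimage_mul (h := fun _ => b⁻¹) hY hZ measurable_const measurableSet_Ioi,
      setIntegral_const, smul_eq_mul]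
  have hmT : μ.real T ≠ 0 := by
    rw [measureReal_def, ← measure_congr hT]
    exact ENNReal.toReal_ne_zero.mpr ⟨htail.ne', measure_ne_top μ _⟩
  rw [gteAlloc, hnum, measure_congr hT, ← measureReal_def]
  field_simp

end

theorem mbrm_mem_W_general
    {Ω : Type*} [MeasurableSpace Ω] (μ : Measure Ω) [IsProbabilityMeasure μ]
    (n : ℕ) (Z : Ω → ℝ) (hZmeas : Measurable Z) (hZpos : ∀ ω, 0 < Z ω)
    (hZint : Integrable Z μ)
    (b : ℝ) (hb : 0 < b)
    (Y : Fin n → Ω → ℝ) (hYmeas : ∀ i, Measurable (Y i))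
    (hYsum : ∀ᵐ ω ∂μ, ∑ i, Y i ω = b)
    (hindep : ProbabilityTheory.IndepFun (fun ω => fun i => Y i ω) Z μ)
    (X : Fin n → Ω → ℝ) (hX : ∀ i, X i = fun ω => Y i ω * Z ω)
    (S : Ω → ℝ) (hS : S = fun ω => ∑ i, X i ω) :
    ∀ q ∈ Set.Ico (0 : ℝ) 1, 0 < μ (tailSet μ S q) →
      ∀ i, cteAlloc μ (X i) S q = gteAlloc μ (X i) S q := by
  intro q _ htail i
  have hSZ : S =ᵐ[μ] fun ω => b * Z ω := by
    filter_upwards [hYsum] with ω hω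
    simp only [hS, hX, ← Finset.sum_mul, hω]
  have hYZ : IndepFun (Y i) Z μ := hindep.comp (measurable_pi_apply i) measurable_id
  have hY : AEStronglyMeasurable (Y i) μ := (hYmeas i).aestronglyMeasurable
  rw [hX i, cteAlloc_mul_of_ae_eq_const_mul hb hSZ hY hZmeas hZpos hZint hYZ htail,
    gteAlloc_mul_of_ae_eq_const_mul hb hSZ hY hZmeas (fun ω => (hZpos ω).ne') hYZ htail]

/-- Multiplicative background risk model: if `X_i = Y_i·Z` with `(Y_1,…,Y_n)` independent of
`Z` and `Y_1 + ⋯ + Y_n = b` a.s., then the CTE-based and GTE-based proportional allocations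
agree at every level. -/
theorem mbrm_mem_W
    {Ω : Type*} [MeasurableSpace Ω] (μ : Measure Ω) [IsProbabilityMeasure μ]
    (n : ℕ) (Z : Ω → ℝ) (hZmeas : Measurable Z) (hZpos : ∀ ω, 0 < Z ω)
    (hZint : Integrable Z μ)
    (b : ℝ) (hb : 0 < b)
    (Y : Fin n → Ω → ℝ) (hYmeas : ∀ i, Measurable (Y i)) (hYnonneg : ∀ i ω, 0 ≤ Y i ω)
    (hYsum : ∀ᵐ ω ∂μ, ∑ i, Y i ω = b)
    (hindep : ProbabilityTheory.IndepFun (fun ω => fun i => Y i ω) Z μ)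
    (X : Fin n → Ω → ℝ) (hX : ∀ i, X i = fun ω => Y i ω * Z ω)
    (S : Ω → ℝ) (hS : S = fun ω => ∑ i, X i ω) :
    ∀ q ∈ Set.Ico (0 : ℝ) 1, 0 < μ (tailSet μ S q) →
      ∀ i, cteAlloc μ (X i) S q = gteAlloc μ (X i) S q :=
  mbrm_mem_W_general μ n Z hZmeas hZpos hZint b hb Y hYmeas hYsum hindep X hX S hS
end

section
/- Let X_1 and X_2 be independent random variables, each uniformly distributed on [0,1], and let S := X_1 + X_2. Then for every integer k ≥ 1 and i ∈ {1,2}, the conditional expectation satisfies 𝔼[X_i^k | σ(S)] = g_k(S) almost surely, where g_k(s) = s^k/(k+1) for 0 ≤ s < 1 and g_k(s) = (1 − (s−1)^{k+1})/((k+1)(2−s)) for 1 ≤ s ≤ 2. Consequently, for k = 2 the ratio 𝔼[(X_i/S)^2 | σ(S)] is not almost surely constant, and there exists q ∈ [0,1) with r^2_{q,1} ≠ r̃^2_{q,1}; hence the distributional equality of the k-th order partially size-biased sums does not imply r^k_{q,i} = r̃^k_{q,i} for all q. -/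
open MeasureTheory Set

/-- The conditional-moment function `g_k` for the sum of two iid Uniform[0,1] variables. -/
noncomputable def uniformCondMoment (k : ℕ) (s : ℝ) : ℝ :=
  if s < 1 then s ^ k / (k + 1)
  else (1 - (s - 1) ^ (k + 1)) / ((k + 1) * (2 - s))

/-!
Conditionally on `S = s`, the variable `X₁` is uniform on the fibre `[max 0 (s - 1), min 1 s]`,
and `g_k(s)` is the mean of `x ^ k` over that fibre. To check this against an event `{S ∈ B}`,
write the expectation as an integral over the unit square, apply the shear `(x, y) ↦ (x, x + y)`
and integrate over `x` first. For `k = 2`, pulling `S⁻²` out of the conditional expectation gives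
`𝔼[(X₁/S)² | S] = g₂(S)/S²`, which is `1/3` on `{S < 1}` and strictly smaller on `{1 < S < 2}`,
two events of positive probability. At `q = 0` the tail event is almost sure, and the two
allocations are `𝔼[X₁²]/𝔼[S²] = 2/7` and `𝔼[(X₁/S)²] = 1 - log 2`.
-/

lemma setIntegral_Icc_eq_intervalIntegral {f : ℝ → ℝ} {a b : ℝ} (hab : a ≤ b) :
    ∫ x in Icc a b, f x = ∫ x in a..b, f x := by
  rw [integral_Icc_eq_integral_Ioc, intervalIntegral.integral_of_le hab]

lemma setIntegral_Icc_zero_one_comp_add_left (f : ℝ → ℝ) (x : ℝ) :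
    ∫ y in Icc (0 : ℝ) 1, f (x + y) = ∫ s in Icc x (x + 1), f s := by
  rw [setIntegral_Icc_eq_intervalIntegral zero_le_one,
    setIntegral_Icc_eq_intervalIntegral (by linarith),
    intervalIntegral.integral_comp_add_left f x, add_zero]

/-- The image of the unit square under the shear `(x, y) ↦ (x, x + y)`. -/
def shearedUnitSquare : Set (ℝ × ℝ) := {p | p.1 ∈ Icc 0 1 ∧ p.2 - p.1 ∈ Icc 0 1}

lemma measurableSet_shearedUnitSquare : MeasurableSet shearedUnitSquare :=
  (measurable_fst measurableSet_Icc).inter ((measurable_snd.sub measurable_fst) measurableSet_Icc)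

lemma mk_mem_shearedUnitSquare_iff {x s : ℝ} :
    (x, s) ∈ shearedUnitSquare ↔ x ∈ Icc (max 0 (s - 1)) (min 1 s) := by
  simp only [shearedUnitSquare, mem_ofPred_eq, mem_Icc, max_le_iff, le_min_iff]
  constructor <;> intro h <;> refine ⟨⟨?_, ?_⟩, ?_, ?_⟩ <;> linarith [h.1.1, h.1.2, h.2.1, h.2.2]

lemma mk_add_mem_shearedUnitSquare_iff {x y : ℝ} :
    (x, x + y) ∈ shearedUnitSquare ↔ x ∈ Icc (0 : ℝ) 1 ∧ y ∈ Icc (0 : ℝ) 1 := by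
  simp only [shearedUnitSquare, mem_ofPred_eq, add_sub_cancel_left]

lemma integrable_indicator_shearedUnitSquare (H : ℝ → ℝ → ℝ)
    (hH : Measurable (Function.uncurry H)) {C : ℝ}
    (hC : ∀ x ∈ Icc (0 : ℝ) 1, ∀ y ∈ Icc (0 : ℝ) 1, |H x (x + y)| ≤ C) :
    Integrable (shearedUnitSquare.indicator (Function.uncurry H)) (volume.prod volume) := by
  have hsub : shearedUnitSquare ⊆ Icc (0 : ℝ) 1 ×ˢ Icc (0 : ℝ) 2 := fun p ⟨hx, hy⟩ =>
    ⟨hx, by linarith [hx.1, hy.1], by linarith [hx.2, hy.2]⟩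
  refine (integrable_indicator_iff measurableSet_shearedUnitSquare).mpr
    (Measure.integrableOn_of_bounded (M := C) ?_ hH.aestronglyMeasurable
      ((ae_restrict_iff' measurableSet_shearedUnitSquare).mpr (ae_of_all _ ?_)))
  · refine ne_top_of_le_ne_top ?_ (measure_mono hsub)
    rw [Measure.prod_prod, Real.volume_Icc, Real.volume_Icc]
    exact ENNReal.mul_ne_top ENNReal.ofReal_ne_top ENNReal.ofReal_ne_top
  · rintro ⟨x, s⟩ ⟨hx, hy⟩
    simpa using hC x hx (s - x) hy

lemma integral_unitSquare_comp_add (H : ℝ → ℝ → ℝ) (hH : Measurable (Function.uncurry H))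
    {C : ℝ} (hC : ∀ x ∈ Icc (0 : ℝ) 1, ∀ y ∈ Icc (0 : ℝ) 1, |H x (x + y)| ≤ C) :
    ∫ x in Icc (0 : ℝ) 1, ∫ y in Icc (0 : ℝ) 1, H x (x + y) =
      ∫ s, ∫ x in Icc (max 0 (s - 1)) (min 1 s), H x s := by
  set K := shearedUnitSquare.indicator (Function.uncurry H) with hK
  have hrow : ∀ x, ∫ s, K (x, s) =
      (Icc (0 : ℝ) 1).indicator (fun x => ∫ y in Icc (0 : ℝ) 1, H x (x + y)) x := by
    intro x
    rw [← integral_add_left_eq_self (fun s => K (x, s)) x]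
    by_cases hx : x ∈ Icc (0 : ℝ) 1
    · rw [indicator_of_mem hx, ← integral_indicator measurableSet_Icc]
      congr 1 with y
      by_cases hy : y ∈ Icc (0 : ℝ) 1
      · rw [indicator_of_mem hy, hK,
          indicator_of_mem (mk_add_mem_shearedUnitSquare_iff.mpr ⟨hx, hy⟩)]
        rfl
      · rw [indicator_of_notMem hy, hK,
          indicator_of_notMem (mt mk_add_mem_shearedUnitSquare_iff.mp (fun h => hy h.2))]
    · rw [indicator_of_notMem hx, hK]
      simp_rw [indicator_of_notMem (mt mk_add_mem_shearedUnitSquare_iff.mp (fun h => hx h.1))]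
      exact integral_zero ℝ ℝ
  have hcol : ∀ s, ∫ x, K (x, s) = ∫ x in Icc (max 0 (s - 1)) (min 1 s), H x s := by
    intro s
    rw [← integral_indicator measurableSet_Icc]
    congr 1 with x
    by_cases hx : x ∈ Icc (max 0 (s - 1)) (min 1 s)
    · rw [indicator_of_mem hx, hK, indicator_of_mem (mk_mem_shearedUnitSquare_iff.mpr hx)]
      rfl
    · rw [indicator_of_notMem hx, hK, indicator_of_notMem (mt mk_mem_shearedUnitSquare_iff.mp hx)]
  calc ∫ x in Icc (0 : ℝ) 1, ∫ y in Icc (0 : ℝ) 1, H x (x + y)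
      = ∫ x, ∫ s, K (x, s) := by simp_rw [hrow]; rw [integral_indicator measurableSet_Icc]
    _ = ∫ s, ∫ x, K (x, s) :=
        integral_integral_swap (integrable_indicator_shearedUnitSquare H hH hC)
    _ = ∫ s, ∫ x in Icc (max 0 (s - 1)) (min 1 s), H x s := by simp_rw [hcol]

lemma measurable_uniformCondMoment (k : ℕ) : Measurable (uniformCondMoment k) :=
  Measurable.ite measurableSet_Iio (by fun_prop) (by fun_prop)

lemma uniformCondMoment_mem_Icc (k : ℕ) {s : ℝ} (hs : s ∈ Icc (0 : ℝ) 2) :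
    uniformCondMoment k s ∈ Icc (0 : ℝ) 1 := by
  obtain ⟨hs0, hs2⟩ := hs
  have hk : (1 : ℝ) ≤ k + 1 := by simp
  unfold uniformCondMoment
  split_ifs with hs1
  · exact ⟨by positivity, div_le_one_of_le₀ ((pow_le_one₀ hs0 hs1.le).trans hk) (by positivity)⟩
  · have hpow : (s - 1) ^ (k + 1) ≤ 1 := pow_le_one₀ (by linarith) (by linarith)
    have hbern : 1 + ((k + 1 : ℕ) : ℝ) * (s - 2) ≤ (s - 1) ^ (k + 1) := by
      simpa [show 1 + (s - 2) = s - 1 by ring] using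
        one_add_mul_le_pow (a := s - 2) (by linarith) (k + 1)
    push_cast at hbern
    exact ⟨div_nonneg (by linarith) (by nlinarith), div_le_one_of_le₀ (by nlinarith) (by nlinarith)⟩

lemma setIntegral_pow_sub_uniformCondMoment (k : ℕ) (s : ℝ) :
    ∫ x in Icc (max 0 (s - 1)) (min 1 s), (x ^ k - uniformCondMoment k s) = 0 := by
  by_cases hs : s < 0 ∨ 2 < s
  · have hempty : Icc (max 0 (s - 1)) (min 1 s) = ∅ := Icc_eq_empty fun h => by
      rcases hs with hs | hs <;>
        linarith [le_max_left 0 (s - 1), le_max_right 0 (s - 1), min_le_left 1 s, min_le_right 1 s]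
    rw [hempty, Measure.restrict_empty, integral_zero_measure]
  push Not at hs
  have hle : max 0 (s - 1) ≤ min 1 s := by
    simp only [max_le_iff, le_min_iff]; constructor <;> constructor <;> linarith
  rw [setIntegral_Icc_eq_intervalIntegral hle, intervalIntegral.integral_sub (intervalIntegral.intervalIntegrable_pow k)
      intervalIntegrable_const, integral_pow, intervalIntegral.integral_const, smul_eq_mul]
  unfold uniformCondMoment
  split_ifs with hs1
  · rw [max_eq_left (by linarith), min_eq_right hs1.le]
    field_simp
    ring
  · rw [max_eq_right (by linarith), min_eq_left (by linarith)]
    rcases hs.2.eq_or_lt with rfl | hs2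
    · norm_num
    · have : (2 : ℝ) - s ≠ 0 := by linarith
      field_simp
      ring

lemma inv_sq_mul_uniformCondMoment_two_of_lt_one {s : ℝ} (hs0 : 0 < s) (hs1 : s < 1) :
    (s ^ 2)⁻¹ * uniformCondMoment 2 s = 1 / 3 := by
  rw [uniformCondMoment, if_pos hs1]
  field_simp
  norm_num

lemma inv_sq_mul_uniformCondMoment_two_lt {s : ℝ} (hs1 : 1 < s) (hs2 : s < 2) :
    (s ^ 2)⁻¹ * uniformCondMoment 2 s < 1 / 3 := by
  have h2s : (2 : ℝ) - s ≠ 0 := by linarith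
  have hg : uniformCondMoment 2 s = (s ^ 2 - s + 1) / 3 := by
    rw [uniformCondMoment, if_neg hs1.not_gt]
    field_simp
    ring
  rw [hg, inv_mul_lt_iff₀ (by positivity)]
  linarith

lemma integral_unitSquare_sq_left : ∫ x in Icc (0 : ℝ) 1, ∫ _y in Icc (0 : ℝ) 1, x ^ 2 = 1 / 3 := by
  norm_num [setIntegral_Icc_eq_intervalIntegral zero_le_one]

lemma integral_unitSquare_add_sq :
    ∫ x in Icc (0 : ℝ) 1, ∫ y in Icc (0 : ℝ) 1, (x + y) ^ 2 = 7 / 6 := by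
  have hinner : ∀ x : ℝ, ∫ y in Icc (0 : ℝ) 1, (x + y) ^ 2 = x ^ 2 + x + 1 / 3 := fun x => by
    rw [setIntegral_Icc_zero_one_comp_add_left (· ^ 2),
      setIntegral_Icc_eq_intervalIntegral (by linarith), integral_pow]
    ring
  simp_rw [hinner]
  rw [setIntegral_Icc_eq_intervalIntegral zero_le_one]
  norm_num

lemma integral_unitSquare_div_add_sq :
    ∫ x in Icc (0 : ℝ) 1, ∫ y in Icc (0 : ℝ) 1, (x / (x + y)) ^ 2 = 1 - Real.log 2 := by
  have hinner : ∀ x ∈ Icc (0 : ℝ) 1, ∫ y in Icc (0 : ℝ) 1, (x / (x + y)) ^ 2 = 1 - (x + 1)⁻¹ := by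
    rintro x ⟨hx0, -⟩
    rw [setIntegral_Icc_zero_one_comp_add_left (fun s => (x / s) ^ 2),
      setIntegral_Icc_eq_intervalIntegral (by linarith)]
    rcases hx0.eq_or_lt with rfl | hx0
    · simp
    · have h0 : (0 : ℝ) ∉ uIcc x (x + 1) := by
        rw [uIcc_of_le (by linarith)]; exact fun h => by linarith [h.1]
      simp_rw [div_pow, div_eq_mul_inv (x ^ 2), ← zpow_natCast, ← zpow_neg]
      rw [intervalIntegral.integral_const_mul, integral_zpow (Or.inr ⟨by norm_num, h0⟩)]
      norm_num
      field_simp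
      ring
  rw [setIntegral_congr_fun measurableSet_Icc hinner,
    setIntegral_Icc_eq_intervalIntegral zero_le_one,
    intervalIntegral.integral_sub intervalIntegrable_const,
    intervalIntegral.integral_comp_add_right (·⁻¹), integral_inv]
  · norm_num
  · rw [uIcc_of_le (by norm_num)]; exact fun h => by linarith [h.1]
  · exact intervalIntegral.intervalIntegrable_inv (fun t ht => by
      rw [uIcc_of_le zero_le_one] at ht; linarith [ht.1]) (by fun_prop)

lemma abs_pow_le_one_of_mem_Icc {x : ℝ} (hx : x ∈ Icc (0 : ℝ) 1) (k : ℕ) : |x ^ k| ≤ 1 := by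
  rw [abs_of_nonneg (pow_nonneg hx.1 k)]
  exact pow_le_one₀ hx.1 hx.2

lemma abs_div_add_sq_le_one {x y : ℝ} (hx : 0 ≤ x) (hy : 0 ≤ y) : |(x / (x + y)) ^ 2| ≤ 1 := by
  rw [abs_of_nonneg (sq_nonneg _)]
  exact pow_le_one₀ (div_nonneg hx (add_nonneg hx hy))
    (div_le_one_of_le₀ (le_add_of_nonneg_right hy) (add_nonneg hx hy))

lemma integrable_uncurry_of_abs_le (F : ℝ → ℝ → ℝ) (hF : Measurable (Function.uncurry F)) {C : ℝ}
    (hC : ∀ x ∈ Icc (0 : ℝ) 1, ∀ y ∈ Icc (0 : ℝ) 1, |F x y| ≤ C) :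
    Integrable (Function.uncurry F)
      (((volume : Measure ℝ).restrict (Icc 0 1)).prod
        ((volume : Measure ℝ).restrict (Icc 0 1))) := by
  have : IsProbabilityMeasure ((volume : Measure ℝ).restrict (Icc (0 : ℝ) 1)) :=
    ⟨by simp [Real.volume_Icc]⟩
  refine Integrable.of_bound hF.aestronglyMeasurable C ?_
  rw [Measure.prod_restrict, ae_restrict_iff' (measurableSet_Icc.prod measurableSet_Icc)]
  exact ae_of_all _ fun p hp => hC p.1 hp.1 p.2 hp.2

open ProbabilityTheory

section IndepUniform

variable {Ω : Type*} [MeasurableSpace Ω] {μ : Measure Ω} {X Y : Ω → ℝ}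

lemma ae_mem_Icc_of_map_eq (hX : Measurable X)
    (hlaw : μ.map X = (volume : Measure ℝ).restrict (Icc 0 1)) : ∀ᵐ ω ∂μ, X ω ∈ Icc (0 : ℝ) 1 :=
  ae_of_ae_map hX.aemeasurable (hlaw ▸ ae_restrict_mem measurableSet_Icc)

lemma ae_pos_of_map_eq (hX : Measurable X)
    (hlaw : μ.map X = (volume : Measure ℝ).restrict (Icc 0 1)) : ∀ᵐ ω ∂μ, 0 < X ω := by
  refine ae_of_ae_map hX.aemeasurable ?_
  rw [hlaw, ← Measure.restrict_congr_set Ioc_ae_eq_Icc]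
  exact (ae_restrict_mem measurableSet_Ioc).mono fun x hx => hx.1

lemma measure_preimage_Ioo_ne_zero_of_map_eq (hX : Measurable X)
    (hlaw : μ.map X = (volume : Measure ℝ).restrict (Icc 0 1)) {a b : ℝ} (ha : 0 ≤ a) (hab : a < b)
    (hb : b ≤ 1) : μ (X ⁻¹' Ioo a b) ≠ 0 := by
  rw [← Measure.map_apply hX measurableSet_Ioo, hlaw, Measure.restrict_apply measurableSet_Ioo,
    inter_eq_left.mpr (Ioo_subset_Icc_self.trans (Icc_subset_Icc ha hb)), Real.volume_Ioo]
  simpa using hab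

structure IndepUniformPair (μ : Measure Ω) (X Y : Ω → ℝ) : Prop where
  measurable_left : Measurable X
  measurable_right : Measurable Y
  indepFun : IndepFun X Y μ
  map_left : μ.map X = (volume : Measure ℝ).restrict (Icc 0 1)
  map_right : μ.map Y = (volume : Measure ℝ).restrict (Icc 0 1)

namespace IndepUniformPair

lemma symm (h : IndepUniformPair μ X Y) : IndepUniformPair μ Y X :=
  ⟨h.measurable_right, h.measurable_left, h.indepFun.symm, h.map_right, h.map_left⟩

lemma measure_inter_preimage_Ioo_ne_zero (h : IndepUniformPair μ X Y) {a b : ℝ} (ha : 0 ≤ a)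
    (hab : a < b) (hb : b ≤ 1) : μ (X ⁻¹' Ioo a b ∩ Y ⁻¹' Ioo a b) ≠ 0 := by
  rw [h.indepFun.measure_inter_preimage_eq_mul _ _ measurableSet_Ioo measurableSet_Ioo]
  exact mul_ne_zero (measure_preimage_Ioo_ne_zero_of_map_eq h.measurable_left h.map_left ha hab hb)
    (measure_preimage_Ioo_ne_zero_of_map_eq h.measurable_right h.map_right ha hab hb)

variable [IsProbabilityMeasure μ]

lemma map_prodMk (h : IndepUniformPair μ X Y) :
    μ.map (fun ω => (X ω, Y ω)) =
      ((volume : Measure ℝ).restrict (Icc 0 1)).prod ((volume : Measure ℝ).restrict (Icc 0 1)) :=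
  ((indepFun_iff_map_prod_eq_prod_map_map h.measurable_left.aemeasurable
    h.measurable_right.aemeasurable).mp h.indepFun).trans (by rw [h.map_left, h.map_right])

lemma integrable_comp (h : IndepUniformPair μ X Y) (F : ℝ → ℝ → ℝ)
    (hF : Measurable (Function.uncurry F)) {C : ℝ}
    (hC : ∀ x ∈ Icc (0 : ℝ) 1, ∀ y ∈ Icc (0 : ℝ) 1, |F x y| ≤ C) :
    Integrable (fun ω => F (X ω) (Y ω)) μ := by
  have hint := integrable_uncurry_of_abs_le F hF hC
  rw [← h.map_prodMk] at hint
  exact hint.comp_measurable (h.measurable_left.prodMk h.measurable_right)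

lemma integral_comp (h : IndepUniformPair μ X Y) (F : ℝ → ℝ → ℝ)
    (hF : Measurable (Function.uncurry F)) {C : ℝ}
    (hC : ∀ x ∈ Icc (0 : ℝ) 1, ∀ y ∈ Icc (0 : ℝ) 1, |F x y| ≤ C) :
    ∫ ω, F (X ω) (Y ω) ∂μ = ∫ x in Icc (0 : ℝ) 1, ∫ y in Icc (0 : ℝ) 1, F x y := by
  have hint := integrable_uncurry_of_abs_le F hF hC
  calc ∫ ω, F (X ω) (Y ω) ∂μ = ∫ p, Function.uncurry F p ∂(μ.map (fun ω => (X ω, Y ω))) :=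
        (integral_map (h.measurable_left.prodMk h.measurable_right).aemeasurable
          (h.map_prodMk ▸ hint.aestronglyMeasurable)).symm
    _ = ∫ x in Icc (0 : ℝ) 1, ∫ y in Icc (0 : ℝ) 1, F x y := by
        rw [h.map_prodMk]
        exact integral_prod _ hint

lemma integrable_pow (h : IndepUniformPair μ X Y) (k : ℕ) : Integrable (fun ω => X ω ^ k) μ :=
  h.integrable_comp (fun x _ => x ^ k) (by fun_prop) fun x hx _ _ => abs_pow_le_one_of_mem_Icc hx k

lemma integrable_div_add_sq (h : IndepUniformPair μ X Y) :
    Integrable (fun ω => (X ω / (X ω + Y ω)) ^ 2) μ :=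
  h.integrable_comp (fun x y => (x / (x + y)) ^ 2) (by fun_prop) fun _ hx _ hy =>
    abs_div_add_sq_le_one hx.1 hy.1

lemma integral_sq (h : IndepUniformPair μ X Y) : ∫ ω, X ω ^ 2 ∂μ = 1 / 3 :=
  (h.integral_comp (fun x _ => x ^ 2) (by fun_prop) fun x hx _ _ =>
    abs_pow_le_one_of_mem_Icc hx 2).trans integral_unitSquare_sq_left

lemma integral_add_sq (h : IndepUniformPair μ X Y) : ∫ ω, (X ω + Y ω) ^ 2 ∂μ = 7 / 6 :=
  (h.integral_comp (fun x y => (x + y) ^ 2) (by fun_prop) (C := 4) fun x hx y hy => by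
    rw [abs_of_nonneg (sq_nonneg _)]; nlinarith [hx.1, hx.2, hy.1, hy.2]).trans
    integral_unitSquare_add_sq

lemma integral_div_add_sq (h : IndepUniformPair μ X Y) :
    ∫ ω, (X ω / (X ω + Y ω)) ^ 2 ∂μ = 1 - Real.log 2 :=
  (h.integral_comp (fun x y => (x / (x + y)) ^ 2) (by fun_prop) fun _ hx _ hy =>
    abs_div_add_sq_le_one hx.1 hy.1).trans integral_unitSquare_div_add_sq

lemma integrable_uniformCondMoment_add (h : IndepUniformPair μ X Y) (k : ℕ) :
    Integrable (fun ω => uniformCondMoment k (X ω + Y ω)) μ :=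
  h.integrable_comp (fun x y => uniformCondMoment k (x + y))
    ((measurable_uniformCondMoment k).comp (by fun_prop)) (C := 1) fun x hx y hy => by
    have hg := uniformCondMoment_mem_Icc k (s := x + y)
      ⟨by linarith [hx.1, hy.1], by linarith [hx.2, hy.2]⟩
    rw [abs_of_nonneg hg.1]; exact hg.2

lemma setIntegral_preimage_add_pow_sub_uniformCondMoment (h : IndepUniformPair μ X Y) (k : ℕ)
    {B : Set ℝ} (hB : MeasurableSet B) :
    ∫ ω in (fun ω => X ω + Y ω) ⁻¹' B, (X ω ^ k - uniformCondMoment k (X ω + Y ω)) ∂μ = 0 := by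
  let H : ℝ → ℝ → ℝ := fun x => B.indicator fun s => x ^ k - uniformCondMoment k s
  have hH : Measurable (Function.uncurry H) :=
    ((measurable_fst.pow_const k).sub
      ((measurable_uniformCondMoment k).comp measurable_snd)).indicator (measurable_snd hB)
  have hHbound : ∀ x ∈ Icc (0 : ℝ) 1, ∀ y ∈ Icc (0 : ℝ) 1, |H x (x + y)| ≤ 1 := by
    intro x hx y hy
    have hg := uniformCondMoment_mem_Icc k (s := x + y)
      ⟨by linarith [hx.1, hy.1], by linarith [hx.2, hy.2]⟩
    exact (norm_indicator_le_norm_self (fun s => x ^ k - uniformCondMoment k s) (x + y)).trans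
      (abs_sub_le_of_nonneg_of_le (pow_nonneg hx.1 k) (pow_le_one₀ hx.1 hx.2) hg.1 hg.2)
  have hfiber : ∀ s, ∫ x in Icc (max 0 (s - 1)) (min 1 s), H x s = 0 := by
    intro s
    by_cases hs : s ∈ B
    · simpa only [H, indicator_of_mem hs] using setIntegral_pow_sub_uniformCondMoment k s
    · simp only [H, indicator_of_notMem hs, integral_zero]
  have hS : Measurable fun ω => X ω + Y ω := h.measurable_left.add h.measurable_right
  rw [← integral_indicator (hS hB)]
  change ∫ ω, H (X ω) (X ω + Y ω) ∂μ = 0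
  rw [h.integral_comp (fun x y => H x (x + y))
      (hH.comp (measurable_fst.prodMk (measurable_fst.add measurable_snd))) hHbound,
    integral_unitSquare_comp_add H hH hHbound]
  simp_rw [hfiber, integral_zero]

lemma condExp_pow (h : IndepUniformPair μ X Y) (k : ℕ) :
    μ[fun ω => X ω ^ k | MeasurableSpace.comap (fun ω => X ω + Y ω) (borel ℝ)] =ᵐ[μ]
      fun ω => uniformCondMoment k (X ω + Y ω) := by
  rw [← BorelSpace.measurable_eq]
  have hg := h.integrable_uniformCondMoment_add k
  refine (ae_eq_condExp_of_forall_setIntegral_eq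
    (h.measurable_left.add h.measurable_right).comap_le (h.integrable_pow k)
    (fun _ _ _ => hg.integrableOn) ?_
    ((measurable_uniformCondMoment k).comp (comap_measurable _)).aestronglyMeasurable).symm
  rintro _ ⟨B, hB, rfl⟩ -
  rw [eq_comm, ← sub_eq_zero, ← integral_sub (h.integrable_pow k).integrableOn hg.integrableOn]
  exact h.setIntegral_preimage_add_pow_sub_uniformCondMoment k hB

lemma condExp_div_add_sq (h : IndepUniformPair μ X Y) :
    μ[fun ω => (X ω / (X ω + Y ω)) ^ 2 | MeasurableSpace.comap (fun ω => X ω + Y ω) (borel ℝ)]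
      =ᵐ[μ] fun ω => ((X ω + Y ω) ^ 2)⁻¹ * uniformCondMoment 2 (X ω + Y ω) := by
  have hsplit : (fun ω => (X ω / (X ω + Y ω)) ^ 2) =
      (fun ω => ((X ω + Y ω) ^ 2)⁻¹) * fun ω => X ω ^ 2 := by
    ext ω; rw [Pi.mul_apply, div_pow, div_eq_inv_mul]
  rw [hsplit]
  refine (condExp_mul_of_stronglyMeasurable_left ?_ (hsplit ▸ h.integrable_div_add_sq)
    (h.integrable_pow 2)).trans (Filter.EventuallyEq.mul Filter.EventuallyEq.rfl (h.condExp_pow 2))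
  exact ((by fun_prop : Measurable fun s : ℝ => (s ^ 2)⁻¹).comp
    (comap_measurable _)).stronglyMeasurable

lemma not_ae_eq_const_condExp_div_add_sq (h : IndepUniformPair μ X Y) :
    ¬ ∃ c : ℝ, μ[fun ω => (X ω / (X ω + Y ω)) ^ 2 |
      MeasurableSpace.comap (fun ω => X ω + Y ω) (borel ℝ)] =ᵐ[μ] fun _ => c := by
  rintro ⟨c, hc⟩
  have hval := h.condExp_div_add_sq.symm.trans hc
  obtain ⟨ω₁, ⟨hx₁, hy₁⟩, hc₁⟩ := Measure.exists_mem_of_measure_ne_zero_of_ae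
    (h.measure_inter_preimage_Ioo_ne_zero (a := 1 / 4) (b := 1 / 2) (by norm_num) (by norm_num)
      (by norm_num)) (ae_restrict_of_ae hval)
  obtain ⟨ω₂, ⟨hx₂, hy₂⟩, hc₂⟩ := Measure.exists_mem_of_measure_ne_zero_of_ae
    (h.measure_inter_preimage_Ioo_ne_zero (a := 1 / 2) (b := 1) (by norm_num) (by norm_num)
      le_rfl) (ae_restrict_of_ae hval)
  have h₁ := inv_sq_mul_uniformCondMoment_two_of_lt_one (s := X ω₁ + Y ω₁)
    (by linarith [hx₁.1, hy₁.1]) (by linarith [hx₁.2, hy₁.2])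
  have h₂ := inv_sq_mul_uniformCondMoment_two_lt (s := X ω₂ + Y ω₂)
    (by linarith [hx₂.1, hy₂.1]) (by linarith [hx₂.2, hy₂.2])
  simp only at hc₁ hc₂
  linarith

end IndepUniformPair

end IndepUniform

lemma VaR_zero {Ω : Type*} [MeasurableSpace Ω] (μ : Measure Ω) (S : Ω → ℝ) : VaR μ S 0 = 0 := by
  have hset : {s : ℝ | 0 ≤ s ∧ ENNReal.ofReal 0 ≤ μ {ω | S ω ≤ s}} = Ici 0 := by ext; simp
  rw [VaR, hset, csInf_Ici]

lemma restrict_tailSet_zero {Ω : Type*} [MeasurableSpace Ω] {μ : Measure Ω} {S : Ω → ℝ}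
    (hS : ∀ᵐ ω ∂μ, 0 < S ω) : μ.restrict (tailSet μ S 0) = μ :=
  Measure.restrict_eq_self_of_ae_mem (by simpa [tailSet, VaR_zero] using hS)

/-- For `S = X₁ + X₂` with `X₁, X₂` iid Uniform[0,1]: `𝔼[X_i^k | σ(S)] = g_k(S)` a.s.; for
`k = 2` the conditional expectation `𝔼[(X₁/S)² | σ(S)]` is not a.s. constant and there is a
level `q ∈ [0,1)` at which the second-order CTE- and GTE-based allocations differ. -/
theorem uniform_counterexample
    {Ω : Type*} [MeasurableSpace Ω] (μ : Measure Ω) [IsProbabilityMeasure μ]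
    (X₁ X₂ : Ω → ℝ) (hX₁ : Measurable X₁) (hX₂ : Measurable X₂)
    (hindep : ProbabilityTheory.IndepFun X₁ X₂ μ)
    (hlaw₁ : Measure.map X₁ μ = (volume : Measure ℝ).restrict (Set.Icc 0 1))
    (hlaw₂ : Measure.map X₂ μ = (volume : Measure ℝ).restrict (Set.Icc 0 1))
    (S : Ω → ℝ) (hS : S = fun ω => X₁ ω + X₂ ω) :
    (∀ k : ℕ, 1 ≤ k →
      (μ[(fun ω => X₁ ω ^ k) | MeasurableSpace.comap S (borel ℝ)] =ᵐ[μ]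
        fun ω => uniformCondMoment k (S ω)) ∧
      (μ[(fun ω => X₂ ω ^ k) | MeasurableSpace.comap S (borel ℝ)] =ᵐ[μ]
        fun ω => uniformCondMoment k (S ω))) ∧
    (¬ ∃ c : ℝ, μ[(fun ω => (X₁ ω / S ω) ^ 2) | MeasurableSpace.comap S (borel ℝ)]
        =ᵐ[μ] fun _ => c) ∧
    (∃ q ∈ Set.Ico (0 : ℝ) 1,
      (∫ ω in tailSet μ S q, X₁ ω ^ 2 ∂μ) / (∫ ω in tailSet μ S q, S ω ^ 2 ∂μ) ≠
        (∫ ω in tailSet μ S q, (X₁ ω / S ω) ^ 2 ∂μ) / (μ (tailSet μ S q)).toReal) := by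
  subst hS
  have h : IndepUniformPair μ X₁ X₂ := ⟨hX₁, hX₂, hindep, hlaw₁, hlaw₂⟩
  have hS_pos : ∀ᵐ ω ∂μ, 0 < X₁ ω + X₂ ω := by
    filter_upwards [ae_pos_of_map_eq hX₁ hlaw₁, ae_mem_Icc_of_map_eq hX₂ hlaw₂] with ω h₁ h₂
    linarith [h₂.1]
  refine ⟨fun k _ => ⟨h.condExp_pow k, ?_⟩, h.not_ae_eq_const_condExp_div_add_sq,
    0, ⟨le_rfl, one_pos⟩, ?_⟩
  · simpa only [add_comm] using h.symm.condExp_pow k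
  · have htail := restrict_tailSet_zero hS_pos
    have htail_measure : μ (tailSet μ (fun ω => X₁ ω + X₂ ω) 0) = 1 := by
      rw [← Measure.restrict_apply_univ, htail, measure_univ]
    rw [htail, htail_measure, h.integral_sq, h.integral_add_sq, h.integral_div_add_sq,
      ENNReal.toReal_one, div_one]
    have := Real.log_two_lt_d9
    norm_num at this ⊢
    intro heq
    linarith
end
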